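/- If a is a finite string, ω is a periodic sequence with period l, and the concatenation aω is strongly almost periodic, then aω is periodic with period l. -/
import Mathlib


/-- The factor of `ω` starting at `i` of length `n`. -/
def seg {α : Type*} (ω : ℕ → α) (i n : ℕ) : List α :=
  (List.range n).map (fun k => ω (i + k))

/-- `x` occurs in `ω` at position `i`. -/
def OccursAt {α : Type*} (ω : ℕ → α) (x : List α) (i : ℕ) : Prop :=
  seg ω i x.length = x

/-- Strongly almost periodic: every factor occurs in every sufficiently long factor. -/
def SAP {α : Type*} (ω : ℕ → α) : Prop :=
  ∀ x : List α, (∃ i, OccursAt ω x i) →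
    ∃ l, ∀ j, ∃ i, j ≤ i ∧ i + x.length ≤ j + l ∧ OccursAt ω x i

/-- Almost periodic: every factor occurring infinitely often occurs in every
sufficiently long factor. -/
def AP {α : Type*} (ω : ℕ → α) : Prop :=
  ∀ x : List α, {i | OccursAt ω x i}.Infinite →
    ∃ l, ∀ j, ∃ i, j ≤ i ∧ i + x.length ≤ j + l ∧ OccursAt ω x i

/-- Eventually strongly almost periodic: some suffix is strongly almost periodic. -/
def EAP {α : Type*} (ω : ℕ → α) : Prop :=
  ∃ n, SAP (fun i => ω (n + i))

/-- The sequence obtained by prepending the string `a` to the sequence `ω`. -/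
def prependStr {Sig : Type*} (a : List Sig) (ω : ℕ → Sig) (i : ℕ) : Sig :=
  if h : i < a.length then a.get ⟨i, h⟩ else ω (i - a.length)

lemma seg_length {α : Type*} (ω : ℕ → α) (i n : ℕ) : (seg ω i n).length = n := by
  simp [seg]

lemma seg_eq_iff {α : Type*} (f g : ℕ → α) (i j n : ℕ) :
    seg f i n = seg g j n ↔ ∀ m < n, f (i + m) = g (j + m) := by
  constructor
  · intro h m hm
    have := congrArg (fun L => L[m]?) h
    simpa [seg, List.getElem?_map, List.getElem?_range, hm] using this
  · intro h
    apply List.ext_get (by simp [seg_length])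
    intro m h1 h2
    simp only [seg, List.get_eq_getElem, List.getElem_map, List.getElem_range]
    exact h m (by simpa [seg_length] using h1)

/-- If `aω` is strongly almost periodic and `ω` is periodic with period `l`, then
`aω` is periodic with period `l`. -/
theorem sap_prepend_periodic {Sig : Type*} [Finite Sig] (a : List Sig) (ω : ℕ → Sig)
    (l : ℕ) (hl : 0 < l) (hper : ∀ i, ω i = ω (i + l))
    (hsap : SAP (prependStr a ω)) :
    ∀ i, prependStr a ω i = prependStr a ω (i + l) := by
  intro k
  set f := prependStr a ω with hf
  set n := k + l + 1 with hn
  have hx : OccursAt f (seg f 0 n) 0 := by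
    unfold OccursAt; rw [seg_length]
  obtain ⟨L, hL⟩ := hsap (seg f 0 n) ⟨0, hx⟩
  obtain ⟨i, hi, -, hocc⟩ := hL a.length
  unfold OccursAt at hocc
  rw [seg_length] at hocc
  rw [seg_eq_iff] at hocc
  have h1 : f k = ω (i + k - a.length) := by
    have := hocc k (by omega)
    rw [Nat.zero_add] at this
    rw [← this, hf, prependStr, dif_neg (by omega)]
  have h2 : f (k + l) = ω (i + k - a.length + l) := by
    have := hocc (k + l) (by omega)
    rw [Nat.zero_add] at this
    rw [← this, hf, prependStr, dif_neg (by omega)]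
    congr 1
    omega
  rw [h1, h2, hper]
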